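/- The multivariate Beta function normalizes the Dirichlet density: the integral of ∏_{c=1}^K y_c^{α_c − 1} over the open (K−1)-simplex equals B(α) = ∏_{c=1}^K Γ(α_c) / Γ(Σ_{c=1}^K α_c), for all α_c > 0. -/

import Mathlib

open MeasureTheory Finset

/-- The multivariate Beta function `B(α) = ∏ Γ(α c) / Γ(∑ α c)`. -/
noncomputable def multiBeta {K : ℕ} (α : Fin K → ℝ) : ℝ :=
  (∏ c, Real.Gamma (α c)) / Real.Gamma (∑ c, α c)

/-- Parametrization of the open `K`-simplex in `ℝ^{K+1}` by its first `K` coordinates. -/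
def openSimplexParam (K : ℕ) : Set (Fin K → ℝ) :=
  {z | (∀ i, 0 < z i) ∧ ∑ i, z i < 1}

/-- The `c`-th coordinate of the full point `y ∈ ℝ^{K+1}` corresponding to the
parameter `z ∈ ℝ^K`, with `y_{K+1} = 1 - ∑ z`. -/
noncomputable def coordFull {K : ℕ} (c : Fin (K + 1)) (z : Fin K → ℝ) : ℝ :=
  if h : (c : ℕ) < K then z ⟨c, h⟩ else 1 - ∑ i, z i

/-- The Dirichlet density with parameter `α`, expressed in the simplex parametrization. -/
noncomputable def dirichletDensity {K : ℕ} (α : Fin (K + 1) → ℝ) (z : Fin K → ℝ) : ℝ :=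
  (1 / multiBeta α) * ∏ c, (coordFull c z) ^ (α c - 1)

/-! Induct on `K`, slicing the simplex along its first coordinate `x`. The slice at `x ∈ (0, 1)`
is the simplex of one dimension less scaled by `1 - x`, so the substitution `w = (1 - x) • v`
splits the integrand into `x ^ (α₀ - 1) * (1 - x) ^ (s - 1)`, with `s = ∑_{c > 0} α_c`, times the
integrand for the tail of `α`. The `x`-integral is the Beta integral `B(α₀, s)`, and
`B(α₀, s) * B(α₁, …, α_K) = B(α)`. Everything is done with `lintegral`, which needs no
integrability; the Bochner integral is recovered at the end since the integrand is nonnegative. -/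

theorem lintegral_comp_smul_of_pos {E : Type*} [NormedAddCommGroup E] [NormedSpace ℝ E]
    [MeasurableSpace E] [BorelSpace E] [FiniteDimensional ℝ E] (μ : Measure E)
    [μ.IsAddHaarMeasure] (f : E → ENNReal) {r : ℝ} (hr : 0 < r) :
    ∫⁻ x, f (r • x) ∂μ = ENNReal.ofReal (r ^ Module.finrank ℝ E)⁻¹ * ∫⁻ x, f x ∂μ := by
  have hmap := Measure.map_addHaar_smul μ hr.ne'
  rw [abs_of_pos (by positivity)] at hmap
  rw [← smul_eq_mul, ← lintegral_smul_measure, ← hmap]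
  exact (lintegral_map_equiv f (MeasurableEquiv.smul₀ r hr.ne')).symm

theorem lintegral_eq_ofReal_pow_mul_lintegral_comp_smul {E : Type*} [NormedAddCommGroup E]
    [NormedSpace ℝ E] [MeasurableSpace E] [BorelSpace E] [FiniteDimensional ℝ E] (μ : Measure E)
    [μ.IsAddHaarMeasure] (f : E → ENNReal) {r : ℝ} (hr : 0 < r) :
    ∫⁻ x, f x ∂μ = ENNReal.ofReal (r ^ Module.finrank ℝ E) * ∫⁻ x, f (r • x) ∂μ := by
  rw [lintegral_comp_smul_of_pos μ f hr, ← mul_assoc, ← ENNReal.ofReal_mul (by positivity),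
    mul_inv_cancel₀ (by positivity), ENNReal.ofReal_one, one_mul]

theorem lintegral_fin_cons {E : Type*} [MeasureSpace E] [SigmaFinite (volume : Measure E)]
    {n : ℕ} {f : (Fin (n + 1) → E) → ENNReal} (hf : Measurable f) :
    ∫⁻ z, f z = ∫⁻ x, ∫⁻ w : Fin n → E, f (Fin.cons x w) := by
  set e := (MeasurableEquiv.piFinSuccAbove (fun _ : Fin (n + 1) => E) 0).symm
  rw [← (volume_preserving_piFinSuccAbove (fun _ : Fin (n + 1) => E) 0).symm.lintegral_comp hf,
    Measure.volume_eq_prod, lintegral_prod (fun p => f (e p)) (hf.comp e.measurable).aemeasurable]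
  simp [e, MeasurableEquiv.piFinSuccAbove_symm_apply, Fin.insertNthEquiv, Fin.insertNth_zero']

theorem setLIntegral_Ioo_rpow_mul_one_sub_rpow {a b : ℝ} (ha : 0 < a) (hb : 0 < b) :
    ∫⁻ x in Set.Ioo (0 : ℝ) 1, ENNReal.ofReal (x ^ (a - 1) * (1 - x) ^ (b - 1)) =
      ENNReal.ofReal (ProbabilityTheory.beta a b) := by
  have hB := ProbabilityTheory.beta_pos ha hb
  have h := ProbabilityTheory.lintegral_betaPDF_eq_one ha hb
  simp_rw [ProbabilityTheory.lintegral_betaPDF, mul_assoc,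
    ENNReal.ofReal_mul (one_div_pos.2 hB).le] at h
  rw [lintegral_const_mul' _ _ ENNReal.ofReal_ne_top, mul_comm] at h
  rw [ENNReal.eq_inv_of_mul_eq_one_left h, ← ENNReal.ofReal_inv_of_pos (by positivity), one_div,
    inv_inv]

theorem multiBeta_nonneg {K : ℕ} {α : Fin K → ℝ} (hα : ∀ c, 0 ≤ α c) : 0 ≤ multiBeta α :=
  div_nonneg (prod_nonneg fun c _ => Real.Gamma_nonneg_of_nonneg (hα c))
    (Real.Gamma_nonneg_of_nonneg (sum_nonneg fun c _ => hα c))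

theorem multiBeta_succ {K : ℕ} (α : Fin (K + 1) → ℝ)
    (hα : Real.Gamma (∑ j : Fin K, α j.succ) ≠ 0) :
    multiBeta α =
      ProbabilityTheory.beta (α 0) (∑ j : Fin K, α j.succ) * multiBeta (fun j => α j.succ) := by
  unfold multiBeta ProbabilityTheory.beta
  rw [Fin.prod_univ_succ, Fin.sum_univ_succ]
  field_simp

theorem coordFull_pos {K : ℕ} {z : Fin K → ℝ} (hz : z ∈ openSimplexParam K) (c : Fin (K + 1)) :
    0 < coordFull c z := by
  unfold coordFull
  split_ifs
  · exact hz.1 _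
  · linarith [hz.2]

theorem coordFull_zero_cons {K : ℕ} (x : ℝ) (w : Fin K → ℝ) :
    coordFull 0 (Fin.cons x w : Fin (K + 1) → ℝ) = x := by
  simp [coordFull]

theorem coordFull_succ_cons_smul {K : ℕ} (x : ℝ) (v : Fin K → ℝ) (j : Fin (K + 1)) :
    coordFull j.succ (Fin.cons x ((1 - x) • v)) = (1 - x) * coordFull j v := by
  unfold coordFull
  by_cases h : (j : ℕ) < K
  · rw [dif_pos (by simpa using h), dif_pos h]
    exact Fin.cons_succ (α := fun _ => ℝ) x _ ⟨j, h⟩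
  · rw [dif_neg (by simpa using h), dif_neg h, Fin.sum_cons]
    simp only [Pi.smul_apply, smul_eq_mul, ← mul_sum]
    ring

theorem cons_mem_openSimplexParam_iff {K : ℕ} (x : ℝ) (w : Fin K → ℝ) :
    Fin.cons x w ∈ openSimplexParam (K + 1) ↔ 0 < x ∧ (∀ i, 0 < w i) ∧ x + ∑ i, w i < 1 := by
  simp [openSimplexParam, Fin.forall_fin_succ, Fin.sum_cons, and_assoc]

theorem mem_Ioo_of_cons_mem_openSimplexParam {K : ℕ} {x : ℝ} {w : Fin K → ℝ}
    (h : Fin.cons x w ∈ openSimplexParam (K + 1)) : x ∈ Set.Ioo 0 1 := by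
  obtain ⟨hx, hw, hsum⟩ := (cons_mem_openSimplexParam_iff x w).1 h
  exact ⟨hx, by linarith [sum_nonneg fun i (_ : i ∈ univ) => (hw i).le]⟩

theorem cons_smul_mem_openSimplexParam_iff {K : ℕ} {x : ℝ} (hx : x < 1) (v : Fin K → ℝ) :
    Fin.cons x ((1 - x) • v) ∈ openSimplexParam (K + 1) ↔ 0 < x ∧ v ∈ openSimplexParam K := by
  have ht : 0 < 1 - x := sub_pos.2 hx
  rw [cons_mem_openSimplexParam_iff]
  simp only [Pi.smul_apply, smul_eq_mul, ← mul_sum, mul_pos_iff_of_pos_left ht, openSimplexParam,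
    Set.mem_ofPred_eq]
  constructor <;> rintro ⟨hx0, hv, hsum⟩ <;> exact ⟨hx0, hv, by nlinarith⟩

theorem measurableSet_openSimplexParam (K : ℕ) : MeasurableSet (openSimplexParam K) :=
  measurableSet_setOfPred.2 (by fun_prop)

@[fun_prop]
theorem measurable_coordFull {K : ℕ} (c : Fin (K + 1)) : Measurable (coordFull c) := by
  unfold coordFull
  split_ifs <;> fun_prop

theorem prod_coordFull_cons_smul_rpow {K : ℕ} (α : Fin (K + 2) → ℝ) {x : ℝ} (hx : x < 1)
    {v : Fin K → ℝ} (hv : v ∈ openSimplexParam K) :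
    ∏ c, coordFull c (Fin.cons x ((1 - x) • v)) ^ (α c - 1) =
      x ^ (α 0 - 1) * (1 - x) ^ (∑ j : Fin (K + 1), α j.succ - (K + 1)) *
        ∏ j, coordFull j v ^ (α j.succ - 1) := by
  have ht : 0 < 1 - x := sub_pos.2 hx
  have hpow : ∏ j : Fin (K + 1), (1 - x) ^ (α j.succ - 1) =
      (1 - x) ^ (∑ j : Fin (K + 1), α j.succ - (K + 1)) := by
    rw [← Real.rpow_sum_of_pos ht, sum_sub_distrib]
    simp
  have hfactor : ∀ j : Fin (K + 1), coordFull j.succ (Fin.cons x ((1 - x) • v)) ^ (α j.succ - 1) =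
      (1 - x) ^ (α j.succ - 1) * coordFull j v ^ (α j.succ - 1) := fun j => by
    rw [coordFull_succ_cons_smul, Real.mul_rpow ht.le (coordFull_pos hv j).le]
  rw [Fin.prod_univ_succ, coordFull_zero_cons, prod_congr rfl fun j _ => hfactor j,
    prod_mul_distrib, hpow, mul_assoc]

theorem setLIntegral_openSimplexParam_succ {K : ℕ} {f : (Fin (K + 1) → ℝ) → ENNReal}
    (hf : Measurable f) :
    ∫⁻ z in openSimplexParam (K + 1), f z =
      ∫⁻ x in Set.Ioo 0 1, ENNReal.ofReal ((1 - x) ^ K) *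
        ∫⁻ v in openSimplexParam K, f (Fin.cons x ((1 - x) • v)) := by
  rw [← lintegral_indicator (measurableSet_openSimplexParam _),
    lintegral_fin_cons (hf.indicator (measurableSet_openSimplexParam _)),
    ← setLIntegral_eq_of_support_subset (s := Set.Ioo 0 1)]
  · refine setLIntegral_congr_fun measurableSet_Ioo fun x hx => ?_
    rw [lintegral_eq_ofReal_pow_mul_lintegral_comp_smul volume _ (sub_pos.2 hx.2),
      Module.finrank_fin_fun, ← lintegral_indicator (measurableSet_openSimplexParam K)]
    congr 2 with v
    classical
    simp only [Set.indicator_apply, cons_smul_mem_openSimplexParam_iff hx.2, hx.1, true_and]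
  · intro x hx
    by_contra hx'
    refine hx ((lintegral_congr fun w => Set.indicator_of_notMem ?_ _).trans lintegral_zero)
    exact fun h => hx' (mem_Ioo_of_cons_mem_openSimplexParam h)

theorem setLIntegral_openSimplexParam_zero_prod_rpow (α : Fin 1 → ℝ) (hα : 0 < α 0) :
    ∫⁻ z in openSimplexParam 0, ENNReal.ofReal (∏ c, coordFull c z ^ (α c - 1)) =
      ENNReal.ofReal (multiBeta α) := by
  have hS : openSimplexParam 0 = Set.univ := by ext z; simp [openSimplexParam]
  have hB : multiBeta α = 1 := by
    simp [multiBeta, (Real.Gamma_pos_of_pos hα).ne']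
  simp [hS, hB, coordFull, volume_pi]

theorem setLIntegral_openSimplexParam_succ_prod_rpow {K : ℕ} (α : Fin (K + 2) → ℝ)
    (hα : ∀ c, 0 < α c) :
    ∫⁻ z in openSimplexParam (K + 1), ENNReal.ofReal (∏ c, coordFull c z ^ (α c - 1)) =
      ENNReal.ofReal (ProbabilityTheory.beta (α 0) (∑ j : Fin (K + 1), α j.succ)) *
        ∫⁻ v in openSimplexParam K, ENNReal.ofReal (∏ j, coordFull j v ^ (α j.succ - 1)) := by
  have hs : 0 < ∑ j : Fin (K + 1), α j.succ := sum_pos (fun j _ => hα j.succ) univ_nonempty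
  have slice : ∀ x ∈ Set.Ioo (0 : ℝ) 1, ENNReal.ofReal ((1 - x) ^ K) *
      ∫⁻ v in openSimplexParam K,
        ENNReal.ofReal (∏ c, coordFull c (Fin.cons x ((1 - x) • v)) ^ (α c - 1)) =
      ENNReal.ofReal (x ^ (α 0 - 1) * (1 - x) ^ (∑ j : Fin (K + 1), α j.succ - 1)) *
        ∫⁻ v in openSimplexParam K, ENNReal.ofReal (∏ j, coordFull j v ^ (α j.succ - 1)) := by
    intro x hx
    have ht : 0 < 1 - x := sub_pos.2 hx.2
    have hpow : (1 - x) ^ K * (1 - x) ^ (∑ j : Fin (K + 1), α j.succ - (K + 1)) =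
        (1 - x) ^ (∑ j : Fin (K + 1), α j.succ - 1) := by
      rw [← Real.rpow_natCast, ← Real.rpow_add ht]
      ring_nf
    rw [setLIntegral_congr_fun (measurableSet_openSimplexParam K) fun v hv => by
        rw [prod_coordFull_cons_smul_rpow α hx.2 hv,
          ENNReal.ofReal_mul (mul_nonneg (Real.rpow_nonneg hx.1.le _) (Real.rpow_nonneg ht.le _))],
      lintegral_const_mul' _ _ ENNReal.ofReal_ne_top, ← mul_assoc,
      ← ENNReal.ofReal_mul (by positivity)]
    congr 2
    linear_combination x ^ (α 0 - 1) * hpow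
  rw [setLIntegral_openSimplexParam_succ (by fun_prop),
    setLIntegral_congr_fun measurableSet_Ioo slice, lintegral_mul_const _ (by fun_prop),
    setLIntegral_Ioo_rpow_mul_one_sub_rpow (hα 0) hs]

theorem setLIntegral_openSimplexParam_prod_rpow (K : ℕ) (α : Fin (K + 1) → ℝ)
    (hα : ∀ c, 0 < α c) :
    ∫⁻ z in openSimplexParam K, ENNReal.ofReal (∏ c, coordFull c z ^ (α c - 1)) =
      ENNReal.ofReal (multiBeta α) := by
  induction K with
  | zero => exact setLIntegral_openSimplexParam_zero_prod_rpow α (hα 0)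
  | succ K ih =>
    have hs : 0 < ∑ j : Fin (K + 1), α j.succ := sum_pos (fun j _ => hα j.succ) univ_nonempty
    rw [setLIntegral_openSimplexParam_succ_prod_rpow α hα, ih _ fun j => hα j.succ,
      ← ENNReal.ofReal_mul (ProbabilityTheory.beta_pos (hα 0) hs).le,
      multiBeta_succ α (Real.Gamma_pos_of_pos hs).ne']

/-- The multivariate Beta function is the normalizing constant of the Dirichlet density:
the integral of `∏ y_c^{α_c - 1}` over the open simplex equals `B(α)`. -/
theorem dirichlet_normalization {K : ℕ} (α : Fin (K + 1) → ℝ) (hα : ∀ c, 0 < α c) :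
    ∫ z in openSimplexParam K, ∏ c, (coordFull c z) ^ (α c - 1) = multiBeta α := by
  have hnonneg : 0 ≤ᵐ[volume.restrict (openSimplexParam K)]
      fun z => ∏ c, coordFull c z ^ (α c - 1) :=
    ae_restrict_of_forall_mem (measurableSet_openSimplexParam K) fun z hz =>
      prod_nonneg fun c _ => Real.rpow_nonneg (coordFull_pos hz c).le _
  rw [integral_eq_lintegral_of_nonneg_ae hnonneg
    (by fun_prop : Measurable fun z => ∏ c, coordFull c z ^ (α c - 1)).aestronglyMeasurable,
    setLIntegral_openSimplexParam_prod_rpow K α hα,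
    ENNReal.toReal_ofReal (multiBeta_nonneg fun c => (hα c).le)]
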